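/- arXiv:2304.00550 — 2 statements merged into one kernel-verified Lean document; each statement's English description precedes it below -/
import Mathlib

section
/- Let X be a real normed vector space of finite dimension d and let n ≥ 3 be odd. Then there exist n points x_1,…,x_n in X for which the Fermat–Torricelli set ft(x_1,…,x_n) contains at least two distinct points, if and only if there exist continuous linear functionals φ_1,…,φ_n on X with ‖φ_i‖ = 1 for all i and Σ_{i=1}^n φ_i = 0, such that there is a nonzero vector v ∈ X belonging to the linear span of the face F(φ_i) for every i = 1,…,n. -/
/-- The Fermat–Torricelli set of the points `x 0, …, x (n-1)`: the set of points minimizing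
the sum of distances to the `x i`. -/
def ft {X : Type*} [NormedAddCommGroup X] {n : ℕ} (x : Fin n → X) : Set X :=
  {p | ∀ q : X, ∑ i, ‖p - x i‖ ≤ ∑ i, ‖q - x i‖}

/-- The face of the unit sphere determined by a norm-one functional `φ`. -/
def face {X : Type*} [NormedAddCommGroup X] [NormedSpace ℝ X] (φ : X →L[ℝ] ℝ) : Set X :=
  {u | ‖u‖ = 1 ∧ φ u = 1}

/-!
A point `p` minimizes `∑ i, ‖· - x i‖` iff there are functionals `φ i` of norm at most one with
`∑ i, φ i = 0` and `φ i (p - x i) = ‖p - x i‖`. Such a family is obtained by Hahn–Banach from the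
sublinear function `y ↦ ∑ i, ‖y i‖` on `Fin n → X`, extending the functional that vanishes on the
constants and takes the value `∑ i, ‖p - x i‖` at `(p - x i)ᵢ`; minimality of `p` is exactly the
domination needed. A family found at one minimizer works at every other one, so for minimizers
`a ≠ b` the vector `b - a = (b - x i) - (a - x i)` lies in the span of each face of `φ i`.
Conversely, if `v = p i - q i` with `φ i` attaining its norm at `p i` and at `q i`, then for the
points `x i = -q i` the same functionals show that both `0` and `v` are minimizers.
-/

open Submodule

section Norming

variable {X : Type*} [NormedAddCommGroup X] [NormedSpace ℝ X] {φ : X →L[ℝ] ℝ} {u v w : X}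

theorem apply_le_norm_of_norm_le_one (hφ : ‖φ‖ ≤ 1) (w : X) : φ w ≤ ‖w‖ :=
  (Real.le_norm_self _).trans <| (φ.le_of_opNorm_le hφ w).trans_eq (one_mul _)

theorem apply_add_eq_norm (hφ : ‖φ‖ ≤ 1) (hu : φ u = ‖u‖) (hw : φ w = ‖w‖) :
    φ (u + w) = ‖u + w‖ :=
  le_antisymm (apply_le_norm_of_norm_le_one hφ _) <| by
    rw [map_add, hu, hw]
    exact norm_add_le u w

theorem apply_smul_eq_norm (hu : φ u = ‖u‖) {c : ℝ} (hc : 0 ≤ c) : φ (c • u) = ‖c • u‖ := by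
  rw [map_smul, hu, norm_smul, Real.norm_of_nonneg hc, smul_eq_mul]

theorem norm_eq_one_of_apply_eq_norm (hφ : ‖φ‖ ≤ 1) (hw₀ : w ≠ 0) (hw : φ w = ‖w‖) :
    ‖φ‖ = 1 := by
  refine le_antisymm hφ ((le_mul_iff_one_le_left (norm_pos_iff.2 hw₀)).1 ?_)
  simpa [hw] using φ.le_opNorm w

theorem mem_span_face_of_apply_eq_norm (hw : φ w = ‖w‖) : w ∈ span ℝ (face φ) := by
  rcases eq_or_ne w 0 with rfl | hw₀
  · exact zero_mem _
  have hn : ‖w‖ ≠ 0 := norm_ne_zero_iff.2 hw₀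
  have hface : ‖w‖⁻¹ • w ∈ face φ :=
    ⟨by rw [norm_smul, norm_inv, norm_norm, inv_mul_cancel₀ hn],
      by rw [map_smul, hw, smul_eq_mul, inv_mul_cancel₀ hn]⟩
  simpa [smul_smul, hn] using smul_mem _ ‖w‖ (subset_span hface)

theorem exists_sub_of_mem_span_face (hφ : ‖φ‖ ≤ 1) (hv : v ∈ span ℝ (face φ)) :
    ∃ p q, φ p = ‖p‖ ∧ φ q = ‖q‖ ∧ v = p - q := by
  induction hv using Submodule.span_induction with
  | mem u hu => exact ⟨u, 0, by rw [hu.1, hu.2], by simp, by simp⟩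
  | zero => exact ⟨0, 0, by simp, by simp, by simp⟩
  | add v w _ _ hv hw =>
    obtain ⟨p, q, hp, hq, rfl⟩ := hv
    obtain ⟨p', q', hp', hq', rfl⟩ := hw
    exact ⟨p + p', q + q', apply_add_eq_norm hφ hp hp', apply_add_eq_norm hφ hq hq', by abel⟩
  | smul c v _ hv =>
    obtain ⟨p, q, hp, hq, rfl⟩ := hv
    rcases le_total 0 c with hc | hc
    · exact ⟨c • p, c • q, apply_smul_eq_norm hp hc, apply_smul_eq_norm hq hc, smul_sub c p q⟩
    · exact ⟨(-c) • q, (-c) • p, apply_smul_eq_norm hq (neg_nonneg.2 hc),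
        apply_smul_eq_norm hp (neg_nonneg.2 hc), by module⟩

end Norming

section Certificate

variable {X : Type*} [NormedAddCommGroup X] [NormedSpace ℝ X] {n : ℕ} {x : Fin n → X} {p q : X}
  {φ : Fin n → X →L[ℝ] ℝ}

/-- Subgradients of `‖·‖` at the `p - x i` summing to zero: a witness of
`0 ∈ ∂(∑ i, ‖· - x i‖)(p)`. -/
structure IsFTCertificate (x : Fin n → X) (p : X) (φ : Fin n → X →L[ℝ] ℝ) : Prop where
  norm_le_one : ∀ i, ‖φ i‖ ≤ 1
  sum_eq_zero : ∑ i, φ i = 0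
  apply_eq_norm : ∀ i, φ i (p - x i) = ‖p - x i‖

theorem IsFTCertificate.sum_apply_sub (hφ : IsFTCertificate x p φ) (q : X) :
    ∑ i, φ i (q - x i) = ∑ i, ‖p - x i‖ := by
  have hzero : ∑ i, φ i (q - p) = 0 := by
    simpa using congr($(hφ.sum_eq_zero) (q - p))
  simp_rw [show ∀ i, q - x i = (p - x i) + (q - p) from fun i => by abel, map_add,
    Finset.sum_add_distrib, hφ.apply_eq_norm, hzero, add_zero]

theorem IsFTCertificate.mem_ft (hφ : IsFTCertificate x p φ) : p ∈ ft x := fun q =>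
  (hφ.sum_apply_sub q).symm.trans_le <|
    Finset.sum_le_sum fun i _ => apply_le_norm_of_norm_le_one (hφ.norm_le_one i) _

theorem IsFTCertificate.of_mem_ft (hφ : IsFTCertificate x p φ) (hq : q ∈ ft x) :
    IsFTCertificate x q φ := by
  refine ⟨hφ.norm_le_one, hφ.sum_eq_zero, fun i => ?_⟩
  have hle : ∀ i ∈ Finset.univ, φ i (q - x i) ≤ ‖q - x i‖ := fun i _ =>
    apply_le_norm_of_norm_le_one (hφ.norm_le_one i) _
  refine (Finset.sum_eq_sum_iff_of_le hle).1 (le_antisymm (Finset.sum_le_sum hle) ?_) i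
    (Finset.mem_univ i)
  rw [hφ.sum_apply_sub]
  exact hq p

theorem mul_sum_norm_le_of_mem_ft (hp : p ∈ ft x) (h : X) (c : ℝ) :
    c * ∑ i, ‖p - x i‖ ≤ ∑ i, ‖h + c • (p - x i)‖ := by
  rcases le_or_gt c 0 with hc | hc
  · exact (mul_nonpos_of_nonpos_of_nonneg hc (by positivity)).trans (by positivity)
  calc c * ∑ i, ‖p - x i‖ ≤ c * ∑ i, ‖(p + c⁻¹ • h) - x i‖ :=
        mul_le_mul_of_nonneg_left (hp _) hc.le
    _ = ∑ i, ‖c • ((p + c⁻¹ • h) - x i)‖ := by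
      simp [norm_smul, abs_of_pos hc, Finset.mul_sum]
    _ = ∑ i, ‖h + c • (p - x i)‖ := by
      congr! 2 with i
      rw [smul_sub, smul_add, smul_inv_smul₀ hc.ne', smul_sub]
      abel

theorem exists_linear_le_sum_norm_of_mem_ft (hp : p ∈ ft x) :
    ∃ Ψ : (Fin n → X) →ₗ[ℝ] ℝ, (∀ y, Ψ y ≤ ∑ i, ‖y i‖) ∧ (∀ h : X, Ψ (fun _ => h) = 0) ∧
      Ψ (fun i => p - x i) = ∑ i, ‖p - x i‖ := by
  set z : Fin n → X := fun i => p - x i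
  let D : Submodule ℝ (Fin n → X) := LinearMap.range (LinearMap.pi fun _ => LinearMap.id)
  by_cases hz : z ∈ D
  · obtain ⟨h, hh⟩ := hz
    have hzh : ∀ i, p - x i = h := fun i => (congr_fun hh i).symm
    have := mul_sum_norm_le_of_mem_ft hp (-h) 1
    simp only [hzh, one_smul, neg_add_cancel, norm_zero, Finset.sum_const_zero, one_mul] at this
    refine ⟨0, fun y => by simp [Finset.sum_nonneg], fun _ => rfl, ?_⟩
    simp only [LinearMap.zero_apply, z, hzh]
    exact (le_antisymm this (by positivity)).symm
  let F₀ : (Fin n → X) →ₗ.[ℝ] ℝ := ⟨D, 0⟩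
  let F := F₀.supSpanSingleton z (∑ i, ‖z i‖) hz
  have hF : ∀ w : F.domain, F w ≤ ∑ i, ‖(w : Fin n → X) i‖ := by
    rintro ⟨w, hw⟩
    obtain ⟨_, ⟨h, rfl⟩, _, hs, rfl⟩ := mem_sup.1 hw
    obtain ⟨c, rfl⟩ := mem_span_singleton.1 hs
    rw [LinearPMap.supSpanSingleton_apply_mk F₀ _ _ hz _ ⟨h, rfl⟩ c]
    simpa [F₀] using mul_sum_norm_le_of_mem_ft hp h c
  obtain ⟨Ψ, hΨF, hΨ⟩ := exists_extension_of_le_sublinear F (fun y => ∑ i, ‖y i‖)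
    (fun c hc y => by simp [norm_smul, abs_of_pos hc, Finset.mul_sum])
    (fun y y' => (Finset.sum_le_sum fun i _ => norm_add_le _ _).trans_eq Finset.sum_add_distrib)
    hF
  refine ⟨Ψ, hΨ, fun h => ?_, ?_⟩
  · rw [hΨF ⟨fun _ => h, mem_sup_left ⟨h, rfl⟩⟩,
      LinearPMap.supSpanSingleton_apply_mk_of_mem F₀ _ _ (x' := fun _ => h) ⟨h, rfl⟩]
    rfl
  · rw [hΨF ⟨z, mem_sup_right (mem_span_singleton_self z)⟩,
      LinearPMap.supSpanSingleton_apply_self]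

theorem exists_isFTCertificate_of_linear_le_sum_norm (Ψ : (Fin n → X) →ₗ[ℝ] ℝ)
    (hΨ : ∀ y, Ψ y ≤ ∑ i, ‖y i‖) (hconst : ∀ h : X, Ψ (fun _ => h) = 0)
    (hp : Ψ (fun i => p - x i) = ∑ i, ‖p - x i‖) : ∃ φ, IsFTCertificate x p φ := by
  have hsingle : ∀ (i : Fin n) (w : X), Ψ (Pi.single i w) ≤ ‖w‖ := fun i w =>
    (hΨ _).trans_eq (by simp [Pi.single_apply, apply_ite])
  have hbound : ∀ i w, ‖(Ψ ∘ₗ LinearMap.single ℝ (fun _ => X) i) w‖ ≤ 1 * ‖w‖ := fun i w => by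
    rw [one_mul, Real.norm_eq_abs, abs_le]
    exact ⟨neg_le.1 (by simpa [Pi.single_neg] using hsingle i (-w)), hsingle i w⟩
  let φ i := (Ψ ∘ₗ LinearMap.single ℝ (fun _ => X) i).mkContinuous 1 (hbound i)
  have hsum : ∀ y, ∑ i, φ i (y i) = Ψ y := fun y => by
    simp_rw [φ, LinearMap.mkContinuous_apply, LinearMap.comp_apply, LinearMap.coe_single,
      ← map_sum, Finset.univ_sum_single]
  have hle : ∀ i ∈ Finset.univ, φ i (p - x i) ≤ ‖p - x i‖ := fun i _ => hsingle i _
  refine ⟨φ, fun i => LinearMap.mkContinuous_norm_le _ zero_le_one _, ?_, fun i => ?_⟩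
  · ext h
    simpa [hconst] using hsum fun _ => h
  · exact (Finset.sum_eq_sum_iff_of_le hle).1 (by rw [hsum fun i => p - x i, hp]) i
      (Finset.mem_univ i)

theorem exists_isFTCertificate_of_mem_ft (hp : p ∈ ft x) : ∃ φ, IsFTCertificate x p φ :=
  let ⟨Ψ, hΨ, hconst, hz⟩ := exists_linear_le_sum_norm_of_mem_ft hp
  exists_isFTCertificate_of_linear_le_sum_norm Ψ hΨ hconst hz

end Certificate

theorem nonunique_ft_iff_consistent_faces_general
    {X : Type*} [NormedAddCommGroup X] [NormedSpace ℝ X]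
    {n : ℕ} :
    (∃ x : Fin n → X, ∃ a ∈ ft x, ∃ b ∈ ft x, a ≠ b) ↔
      ∃ φ : Fin n → (X →L[ℝ] ℝ),
        (∀ i, ‖φ i‖ = 1) ∧ ∑ i, φ i = 0 ∧
        ∃ v : X, v ≠ 0 ∧ ∀ i, v ∈ Submodule.span ℝ (face (φ i)) := by
  constructor
  · rintro ⟨x, a, ha, b, hb, hab⟩
    obtain ⟨φ, hφa⟩ := exists_isFTCertificate_of_mem_ft ha
    have hφb := hφa.of_mem_ft hb
    refine ⟨φ, fun i => ?_, hφa.sum_eq_zero, b - a, sub_ne_zero.2 hab.symm, fun i => ?_⟩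
    · rcases eq_or_ne a (x i) with rfl | hai
      · exact norm_eq_one_of_apply_eq_norm (hφb.norm_le_one i) (sub_ne_zero.2 hab.symm)
          (hφb.apply_eq_norm i)
      · exact norm_eq_one_of_apply_eq_norm (hφa.norm_le_one i) (sub_ne_zero.2 hai)
          (hφa.apply_eq_norm i)
    · rw [← sub_sub_sub_cancel_right b a (x i)]
      exact sub_mem (mem_span_face_of_apply_eq_norm (hφb.apply_eq_norm i))
        (mem_span_face_of_apply_eq_norm (hφa.apply_eq_norm i))
  · rintro ⟨φ, hφ, hsum, v, hv₀, hspan⟩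
    choose p q hp hq hpq using fun i => exists_sub_of_mem_span_face (hφ i).le (hspan i)
    have hφ₀ : IsFTCertificate (fun i => -q i) 0 φ :=
      ⟨fun i => (hφ i).le, hsum, fun i => by simpa using hq i⟩
    have hφv : IsFTCertificate (fun i => -q i) v φ :=
      ⟨fun i => (hφ i).le, hsum, fun i => by rw [sub_neg_eq_add, hpq i, sub_add_cancel]; exact hp i⟩
    exact ⟨_, 0, hφ₀.mem_ft, v, hφv.mem_ft, hv₀.symm⟩

/-- Criterion for non-uniqueness: for odd `n ≥ 3`, there exist `n` points whose
Fermat–Torricelli set is non-unique iff there is a consistent set of `n` faces of the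
unit sphere whose linear spans all contain a common line. -/
theorem nonunique_ft_iff_consistent_faces
    {X : Type*} [NormedAddCommGroup X] [NormedSpace ℝ X] [FiniteDimensional ℝ X]
    {n : ℕ} (hn : 3 ≤ n) (hodd : Odd n) :
    (∃ x : Fin n → X, ∃ a ∈ ft x, ∃ b ∈ ft x, a ≠ b) ↔
      ∃ φ : Fin n → (X →L[ℝ] ℝ),
        (∀ i, ‖φ i‖ = 1) ∧ ∑ i, φ i = 0 ∧
        ∃ v : X, v ≠ 0 ∧ ∀ i, v ∈ Submodule.span ℝ (face (φ i)) :=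
  nonunique_ft_iff_consistent_faces_general
end

section
/- Let X be a real normed vector space of dimension 2 and let 2 ≤ k ≤ n−1. Suppose there exist continuous linear functionals φ_1,…,φ_n on X with ‖φ_i‖ = 1 for all i and Σ_{i=1}^n φ_i = 0, such that the faces F(φ_1),…,F(φ_k) each contain at least two distinct points, the faces F(φ_{k+1}),…,F(φ_n) are singletons, and the linear span of the union of these singleton faces is a one-dimensional subspace of X. Then there exist points x_1,…,x_n in X and a ≠ b in X such that the Fermat–Torricelli set ft(x_1,…,x_n) equals the closed segment with endpoints a and b. -/
open Finset

section Span

variable {K V : Type*} [DivisionRing K] [AddCommGroup V] [Module K V]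

theorem nonempty_of_finrank_span_eq_one {s : Set V}
    (hs : Module.finrank K (Submodule.span K s) = 1) : s.Nonempty := by
  rw [Set.nonempty_iff_ne_empty]
  rintro rfl
  rw [Submodule.span_empty, finrank_bot] at hs
  exact zero_ne_one hs

theorem mem_span_singleton_of_finrank_span_eq_one {s : Set V}
    (hs : Module.finrank K (Submodule.span K s) = 1) {v w : V} (hv : v ∈ s) (hw : w ∈ s)
    (hw₀ : w ≠ 0) : v ∈ K ∙ w := by
  have : FiniteDimensional K (Submodule.span K s) := Module.finite_of_finrank_eq_succ hs
  have hle : K ∙ w ≤ Submodule.span K s :=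
    (Submodule.span_singleton_le_iff_mem _ _).2 (Submodule.subset_span hw)
  rw [Submodule.eq_of_le_of_finrank_eq hle (by rw [hs, finrank_span_singleton hw₀])]
  exact Submodule.subset_span hv

end Span

section Segment

variable {E : Type*} [NormedAddCommGroup E] [NormedSpace ℝ E]

theorem exists_ne_segment_eq_of_subset_span_singleton {S : Set E} {u p q : E}
    (hS : IsCompact S) (hconv : Convex ℝ S) (hline : S ⊆ ℝ ∙ u)
    (hp : p ∈ S) (hq : q ∈ S) (hpq : p ≠ q) : ∃ a b : E, a ≠ b ∧ S = segment ℝ a b := by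
  have hu : u ≠ 0 := by
    rintro rfl
    simp only [Submodule.span_singleton_eq_bot.2 rfl, Submodule.bot_coe] at hline
    exact hpq ((hline hp).trans (hline hq).symm)
  set L := LinearMap.toSpanSingleton ℝ E u
  set T := L ⁻¹' S
  have hST : S = L '' T := by
    refine (Set.image_preimage_eq_of_subset ?_).symm
    rwa [← LinearMap.coe_range, LinearMap.range_toSpanSingleton]
  have hT : IsCompact T := (isClosedEmbedding_smul_left hu).isCompact_preimage hS
  have hTne : T.Nonempty := by
    obtain ⟨t, -, rfl⟩ := hST ▸ hp
    exact ⟨t, ‹_›⟩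
  obtain ⟨a, b, hab⟩ : ∃ a b, T = segment ℝ a b := by
    refine ⟨sInf T, sSup T, ?_⟩
    rw [segment_eq_Icc (csInf_le_csSup hTne hT.bddBelow hT.bddAbove)]
    exact eq_Icc_of_connected_compact ⟨hTne, (hconv.linear_preimage L).isPreconnected⟩ hT
  have hseg : S = segment ℝ (L a) (L b) := by
    rw [hST, hab]
    exact image_segment ℝ L.toAffineMap a b
  refine ⟨L a, L b, fun he => hpq ?_, hseg⟩
  rw [hseg, he, segment_same] at hp hq
  exact hp.trans hq.symm

end Segment

section Face

variable {X : Type*} [NormedAddCommGroup X] [NormedSpace ℝ X] {φ : X →L[ℝ] ℝ}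

theorem apply_le_norm_of_opNorm_le_one (hφ : ‖φ‖ ≤ 1) (z : X) : φ z ≤ ‖z‖ :=
  (le_abs_self _).trans <| by simpa using φ.le_of_opNorm_le hφ z

theorem ne_zero_of_mem_face {u : X} (hu : u ∈ face φ) : u ≠ 0 :=
  ne_zero_of_norm_ne_zero (hu.1 ▸ one_ne_zero)

theorem apply_smul_add_smul_eq_norm_of_mem_face (hφ : ‖φ‖ ≤ 1) {U V : X}
    (hU : U ∈ face φ) (hV : V ∈ face φ) {c d : ℝ} (hc : 0 ≤ c) (hd : 0 ≤ d) :
    φ (c • U + d • V) = ‖c • U + d • V‖ := by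
  have hval : φ (c • U + d • V) = c + d := by simp [hU.2, hV.2]
  refine le_antisymm (apply_le_norm_of_opNorm_le_one hφ _) ?_
  calc ‖c • U + d • V‖ ≤ ‖c • U‖ + ‖d • V‖ := norm_add_le _ _
    _ = φ (c • U + d • V) := by
      rw [hval, norm_smul_of_nonneg hc, norm_smul_of_nonneg hd, hU.1, hV.1, mul_one, mul_one]

theorem exists_forall_apply_sub_smul_eq_norm (hφ : ‖φ‖ ≤ 1) {U V z : X}
    (hU : U ∈ face φ) (hV : V ∈ face φ) (hz : z ∈ Submodule.span ℝ {U, V}) :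
    ∃ y : X, ∀ t ∈ Set.Icc (0 : ℝ) 1, φ (y - t • z) = ‖y - t • z‖ := by
  obtain ⟨a, b, rfl⟩ := Submodule.mem_span_pair.1 hz
  refine ⟨(|a| + |b|) • U + (|a| + |b|) • V, fun t ⟨ht₀, ht₁⟩ => ?_⟩
  have hsplit : (|a| + |b|) • U + (|a| + |b|) • V - t • (a • U + b • V) =
      (|a| + |b| - t * a) • U + (|a| + |b| - t * b) • V := by module
  rw [hsplit]
  refine apply_smul_add_smul_eq_norm_of_mem_face hφ hU hV ?_ ?_ <;>
    nlinarith [abs_nonneg a, abs_nonneg b, le_abs_self a, le_abs_self b]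

theorem span_pair_eq_top_of_mem_face (hX : Module.finrank ℝ X = 2) {U V : X}
    (hU : U ∈ face φ) (hV : V ∈ face φ) (hUV : U ≠ V) : Submodule.span ℝ {U, V} = ⊤ := by
  have hind : LinearIndependent ℝ ![U, V] := by
    refine LinearIndependent.pair_iff.2 fun s t hst => ?_
    have hts : s + t = 0 := by simpa [hU.2, hV.2] using congrArg φ hst
    have hs : s • (U - V) = 0 := by rw [← hst]; linear_combination (norm := module) -hts • V
    have hs0 : s = 0 := (smul_eq_zero.1 hs).resolve_right (sub_ne_zero.2 hUV)
    exact ⟨hs0, by linarith⟩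
  rw [← Matrix.range_cons_cons_empty U V ![]]
  exact hind.span_eq_top_of_card_eq_finrank (by simp [hX])

theorem mem_span_singleton_of_face_eq_singleton {w z : X} (hw : face φ = {w})
    (hz : φ z = ‖z‖) : z ∈ ℝ ∙ w := by
  rcases eq_or_ne z 0 with rfl | hz₀
  · exact Submodule.zero_mem _
  have hpos : 0 < ‖z‖ := norm_pos_iff.2 hz₀
  have hmem : ‖z‖⁻¹ • z ∈ face φ := by
    refine ⟨?_, ?_⟩
    · rw [norm_smul_of_nonneg (inv_nonneg.2 hpos.le), inv_mul_cancel₀ hpos.ne']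
    · rw [map_smul, smul_eq_mul, hz, inv_mul_cancel₀ hpos.ne']
  rw [hw, Set.mem_singleton_iff] at hmem
  refine Submodule.mem_span_singleton.2 ⟨‖z‖, ?_⟩
  rw [← hmem, smul_smul, mul_inv_cancel₀ hpos.ne', one_smul]

end Face

section FermatTorricelli

variable {X : Type*} [NormedAddCommGroup X] {n : ℕ}

theorem isClosed_ft (x : Fin n → X) : IsClosed (ft x) := by
  have : ft x = ⋂ q, {p | ∑ i, ‖p - x i‖ ≤ ∑ i, ‖q - x i‖} := by ext; simp [ft]
  rw [this]
  exact isClosed_iInter fun q => isClosed_le (by fun_prop) continuous_const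

theorem convex_ft [NormedSpace ℝ X] (x : Fin n → X) : Convex ℝ (ft x) := by
  intro p hp q hq a b ha hb hab r
  calc ∑ i, ‖a • p + b • q - x i‖ = ∑ i, ‖a • (p - x i) + b • (q - x i)‖ := by
        congr! 2 with i
        linear_combination (norm := module) hab • x i
    _ ≤ ∑ i, (a * ‖p - x i‖ + b * ‖q - x i‖) :=
        sum_le_sum fun i _ => convexOn_univ_norm.2 trivial trivial ha hb hab
    _ = a * ∑ i, ‖p - x i‖ + b * ∑ i, ‖q - x i‖ := by rw [sum_add_distrib, mul_sum, mul_sum]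
    _ ≤ a * ∑ i, ‖r - x i‖ + b * ∑ i, ‖r - x i‖ :=
        add_le_add (mul_le_mul_of_nonneg_left (hp r) ha) (mul_le_mul_of_nonneg_left (hq r) hb)
    _ = ∑ i, ‖r - x i‖ := by rw [← add_mul, hab, one_mul]

theorem ft_subset_closedBall (x : Fin n → X) (j : Fin n) :
    ft x ⊆ Metric.closedBall 0 (2 * ∑ i, ‖x i‖) := by
  intro p hp
  have hmin : ∑ i, ‖p - x i‖ ≤ ∑ i, ‖x i‖ := by simpa using hp 0
  have hj : ‖x j‖ ≤ ∑ i, ‖x i‖ := single_le_sum (fun i _ => norm_nonneg (x i)) (mem_univ j)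
  have hpj : ‖p - x j‖ ≤ ∑ i, ‖p - x i‖ :=
    single_le_sum (fun i _ => norm_nonneg (p - x i)) (mem_univ j)
  rw [mem_closedBall_zero_iff]
  linarith [norm_le_norm_sub_add p (x j)]

theorem isCompact_ft [NormedSpace ℝ X] [FiniteDimensional ℝ X] (x : Fin n → X) (j : Fin n) :
    IsCompact (ft x) :=
  Metric.isCompact_of_isClosed_isBounded (isClosed_ft x)
    (Metric.isBounded_closedBall.subset (ft_subset_closedBall x j))

end FermatTorricelli

section Calibration

variable {X : Type*} [NormedAddCommGroup X] [NormedSpace ℝ X] {n : ℕ}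

theorem ft_eq_of_forall_apply_sub_eq_norm {φ : Fin n → X →L[ℝ] ℝ} (hnorm : ∀ i, ‖φ i‖ ≤ 1)
    (hsum : ∑ i, φ i = 0) {x : Fin n → X} {p₀ : X} (hp₀ : ∀ i, φ i (x i - p₀) = ‖x i - p₀‖) :
    ft x = {p | ∀ i, φ i (x i - p) = ‖x i - p‖} := by
  have hconst : ∀ p, ∑ i, φ i (x i - p) = ∑ i, φ i (x i) := fun p => by
    simp only [map_sub, sum_sub_distrib, ← _root_.sum_apply, hsum, zero_apply, sub_zero]
  have hle : ∀ p, ∀ i ∈ univ, φ i (x i - p) ≤ ‖x i - p‖ :=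
    fun p i _ => apply_le_norm_of_opNorm_le_one (hnorm i) _
  have hmin : ∀ p, ∑ i, φ i (x i) ≤ ∑ i, ‖p - x i‖ := fun p => by
    simpa only [hconst, norm_sub_rev (x _)] using sum_le_sum (hle p)
  have hp₀min : ∑ i, ‖p₀ - x i‖ = ∑ i, φ i (x i) := by
    simp only [norm_sub_rev p₀, ← hp₀, hconst]
  ext p
  calc p ∈ ft x ↔ ∑ i, ‖p - x i‖ ≤ ∑ i, φ i (x i) :=
        ⟨fun hp => hp₀min ▸ hp p₀, fun hp q => hp.trans (hmin q)⟩
    _ ↔ ∑ i, φ i (x i - p) = ∑ i, ‖x i - p‖ := by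
        simp only [hconst, norm_sub_rev p]
        exact ⟨fun h => (le_antisymm h (by simpa only [norm_sub_rev p] using hmin p)).symm,
          fun h => h.ge⟩
    _ ↔ ∀ i, φ i (x i - p) = ‖x i - p‖ := by simpa using sum_eq_sum_iff_of_le (hle p)

theorem exists_ne_segment_eq_ft_of_face_eq_singleton [FiniteDimensional ℝ X]
    {φ : Fin n → X →L[ℝ] ℝ} (hnorm : ∀ i, ‖φ i‖ ≤ 1) (hsum : ∑ i, φ i = 0)
    {i₀ : Fin n} {w : X} (hface : face (φ i₀) = {w}) {x : Fin n → X} {u : X} (hu : u ≠ 0)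
    (hx : ∀ i, ∀ t ∈ Set.Icc (0 : ℝ) 1, φ i (x i - t • u) = ‖x i - t • u‖) :
    ∃ a b : X, a ≠ b ∧ ft x = segment ℝ a b := by
  have hx₀ : ∀ i, φ i (x i - 0) = ‖x i - 0‖ := fun i => by
    simpa using hx i 0 ⟨le_rfl, zero_le_one⟩
  have hft := ft_eq_of_forall_apply_sub_eq_norm hnorm hsum hx₀
  have hline : ft x ⊆ ℝ ∙ w := fun p hp => by
    rw [hft] at hp
    have h := sub_mem (mem_span_singleton_of_face_eq_singleton hface (hx₀ i₀))
      (mem_span_singleton_of_face_eq_singleton hface (hp i₀))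
    rwa [sub_sub_sub_cancel_left, sub_zero] at h
  refine exists_ne_segment_eq_of_subset_span_singleton (isCompact_ft x i₀) (convex_ft x) hline
    (p := 0) (q := u) ?_ ?_ hu.symm
  · rw [hft]; exact hx₀
  · rw [hft]; simpa using fun i => hx i 1 ⟨zero_le_one, le_rfl⟩

end Calibration

theorem ft_segment_of_consistent_flattenings_and_collinear_points_general
    {X : Type*} [NormedAddCommGroup X] [NormedSpace ℝ X]
    (hd : Module.finrank ℝ X = 2)
    {n k : ℕ}
    (φ : Fin n → (X →L[ℝ] ℝ))
    (hnorm : ∀ i, ‖φ i‖ = 1) (hsum : ∑ i, φ i = 0)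
    (hflat : ∀ i : Fin n, (i : ℕ) < k →
      ∃ u v : X, u ≠ v ∧ u ∈ face (φ i) ∧ v ∈ face (φ i))
    (hpoint : ∀ i : Fin n, k ≤ (i : ℕ) → ∃ u : X, face (φ i) = {u})
    (hspan : Module.finrank ℝ
      (Submodule.span ℝ (⋃ i ∈ {i : Fin n | k ≤ (i : ℕ)}, face (φ i))) = 1) :
    ∃ x : Fin n → X, ∃ a b : X, a ≠ b ∧ ft x = segment ℝ a b := by
  have : FiniteDimensional ℝ X := Module.finite_of_finrank_eq_succ hd
  obtain ⟨u, hu⟩ := nonempty_of_finrank_span_eq_one hspan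
  obtain ⟨i₀, hi₀, hu₀⟩ := Set.mem_iUnion₂.1 hu
  have hface₀ : face (φ i₀) = {u} := by
    obtain ⟨w, hw⟩ := hpoint i₀ hi₀
    rw [hw, Set.eq_of_mem_singleton (hw ▸ hu₀ : u ∈ ({w} : Set X))]
  have htight : ∀ i, ∃ y : X, ∀ t ∈ Set.Icc (0 : ℝ) 1, φ i (y - t • u) = ‖y - t • u‖ := by
    intro i
    rcases lt_or_ge (i : ℕ) k with hi | hi
    · obtain ⟨U, V, hUV, hU, hV⟩ := hflat i hi
      refine exists_forall_apply_sub_smul_eq_norm (hnorm i).le hU hV ?_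
      rw [span_pair_eq_top_of_mem_face hd hU hV hUV]
      exact Submodule.mem_top
    · obtain ⟨w, hw⟩ := hpoint i hi
      have hwface : w ∈ face (φ i) := hw ▸ rfl
      refine exists_forall_apply_sub_smul_eq_norm (hnorm i).le hwface hwface ?_
      rw [Set.pair_eq_singleton]
      exact mem_span_singleton_of_finrank_span_eq_one hspan hu
        (Set.mem_biUnion (x := i) hi hwface) (ne_zero_of_mem_face hwface)
  choose x hx using htight
  exact ⟨x, exists_ne_segment_eq_ft_of_face_eq_singleton (fun i => (hnorm i).le) hsum hface₀
    (ne_zero_of_mem_face hu₀) hx⟩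

/-- If a Minkowski plane has a consistent set of `n` faces consisting of `k` flattenings
(`2 ≤ k ≤ n-1`) and `n-k` point-faces whose union spans a one-dimensional subspace, then
there are `n` points whose Fermat–Torricelli set is a non-degenerate segment. -/
theorem ft_segment_of_consistent_flattenings_and_collinear_points
    {X : Type*} [NormedAddCommGroup X] [NormedSpace ℝ X]
    (hd : Module.finrank ℝ X = 2)
    {n k : ℕ} (hk₁ : 2 ≤ k) (hk₂ : k ≤ n - 1)
    (φ : Fin n → (X →L[ℝ] ℝ))
    (hnorm : ∀ i, ‖φ i‖ = 1) (hsum : ∑ i, φ i = 0)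
    (hflat : ∀ i : Fin n, (i : ℕ) < k →
      ∃ u v : X, u ≠ v ∧ u ∈ face (φ i) ∧ v ∈ face (φ i))
    (hpoint : ∀ i : Fin n, k ≤ (i : ℕ) → ∃ u : X, face (φ i) = {u})
    (hspan : Module.finrank ℝ
      (Submodule.span ℝ (⋃ i ∈ {i : Fin n | k ≤ (i : ℕ)}, face (φ i))) = 1) :
    ∃ x : Fin n → X, ∃ a b : X, a ≠ b ∧ ft x = segment ℝ a b :=
  ft_segment_of_consistent_flattenings_and_collinear_points_general hd φ hnorm hsum hflat hpoint
    hspan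
end
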